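/- Let n be a natural number and let w and w' be two words over the alphabet of all subsets of {1,…,n} such that every letter of w and every letter of w' has cardinality exactly ⌊n/2⌋, and such that the set of letters occurring in w differs from the set of letters occurring in w'. Then there exists a single letter μ (a subset of {1,…,n}) such that exactly one of the one-letter extensions w·μ and w'·μ belongs to L_n; here L_n is the set of all nonempty words μ₁μ₂…μ_k μ (with k ≥ 0) over this alphabet such that μ_i ∩ μ ≠ ∅ for every i ∈ {1,…,k}. -/

import Mathlib

/-- `Ln n` is the language of all nonempty words `μ₁ μ₂ … μ_k μ` (with `k ≥ 0`)
over the alphabet of all subsets of `Fin n` such that every letter other than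
the last one has nonempty intersection with the last letter. -/
def Ln (n : ℕ) : Language (Finset (Fin n)) :=
  { w | ∃ (ws : List (Finset (Fin n))) (μ : Finset (Fin n)),
      w = ws ++ [μ] ∧ ∀ μi ∈ ws, (μi ∩ μ).Nonempty }

theorem Finset.inter_compl_nonempty_of_card_eq_of_ne {α : Type*} [Fintype α] [DecidableEq α]
    {s t : Finset α} (hcard : t.card = s.card) (hne : t ≠ s) : (t ∩ sᶜ).Nonempty := by
  by_contra hempty
  rw [Finset.not_nonempty_iff_eq_empty, ← Finset.disjoint_iff_inter_eq_empty,
    disjoint_compl_right_iff] at hempty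
  exact hne (Finset.eq_of_subset_of_card_le hempty hcard.ge)

theorem append_singleton_mem_Ln_iff {n : ℕ} (w : List (Finset (Fin n))) (μ : Finset (Fin n)) :
    w ++ [μ] ∈ Ln n ↔ ∀ S ∈ w, (S ∩ μ).Nonempty := by
  constructor
  · rintro ⟨ws, μ', heq, hws⟩
    obtain ⟨rfl, rfl⟩ := List.append_inj' heq rfl |>.imp_right List.singleton_inj.mp
    exact hws
  · exact fun h ↦ ⟨w, μ, rfl, h⟩

/-- `Sᶜ` misses `S` but meets every other set of size `#S`, so it rejects `w` and accepts `w'`. -/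
theorem xor_append_compl_mem_Ln {n : ℕ} {w w' : List (Finset (Fin n))} {S : Finset (Fin n)}
    (hS : S ∈ w) (hS' : S ∉ w') (hw' : ∀ T ∈ w', T.card = S.card) :
    Xor (w ++ [Sᶜ] ∈ Ln n) (w' ++ [Sᶜ] ∈ Ln n) := by
  refine Or.inr ⟨?_, ?_⟩
  · rw [append_singleton_mem_Ln_iff]
    exact fun T hT ↦ Finset.inter_compl_nonempty_of_card_eq_of_ne (hw' T hT)
      (ne_of_mem_of_not_mem hT hS')
  · rw [append_singleton_mem_Ln_iff]
    intro h
    simpa using h S hS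

/-- If `w` and `w'` are words over the alphabet of all subsets of `Fin n`, all
of whose letters have cardinality exactly `⌊n/2⌋`, and the sets of letters
occurring in `w` and `w'` differ, then some one-letter extension distinguishes
`w` and `w'` with respect to `Ln n`. -/
theorem exists_one_letter_extension_distinguishing
    (n : ℕ) (w w' : List (Finset (Fin n)))
    (hw : ∀ S ∈ w, S.card = n / 2) (hw' : ∀ S ∈ w', S.card = n / 2)
    (hne : w.toFinset ≠ w'.toFinset) :
    ∃ μ : Finset (Fin n), Xor' (w ++ [μ] ∈ Ln n) (w' ++ [μ] ∈ Ln n) := by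
  obtain ⟨S, ⟨hSw, hSw'⟩ | ⟨hSw', hSw⟩⟩ : ∃ S, Xor (S ∈ w) (S ∈ w') := by
    simpa [xor_iff_not_iff, Finset.ext_iff] using hne
  · exact ⟨Sᶜ, xor_append_compl_mem_Ln hSw hSw' fun T hT ↦ (hw' T hT).trans (hw S hSw).symm⟩
  · exact ⟨Sᶜ, (xor_append_compl_mem_Ln hSw' hSw fun T hT ↦
      (hw T hT).trans (hw' S hSw').symm).symm⟩
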